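/- arXiv:2507.00897 — 2 statements merged into one kernel-verified Lean document; each statement's English description precedes it below -/
import Mathlib

section
/- Let (α_n) be a nonnegative increasing stable sequence (with α_{2n} ≤ M α_n) and θ ∈ Λ_∞(α). If for every p ∈ ℕ there exists q ∈ ℕ such that ‖θ^{*k}‖_p ≤ e^{q α_1} for all k ∈ ℕ, then T̂_θ : Λ_∞(α) → Λ_∞(α) is power bounded; conversely, power boundedness of T̂_θ implies that for every p there exists q with ‖θ^{*k}‖_p ≤ e^{q α_1} for all k. -/
/-- Convolution of two sequences: (a*b)_m = ∑_{i=0}^m a_i b_{m-i}. -/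
noncomputable def conv (a b : ℕ → ℂ) : ℕ → ℂ :=
  fun m => ∑ i ∈ Finset.range (m + 1), a i * b (m - i)

/-- k-fold convolution power of a sequence (k = 0 gives the unit δ). -/
noncomputable def convPow (a : ℕ → ℂ) : ℕ → (ℕ → ℂ)
  | 0 => fun m => if m = 0 then 1 else 0
  | k + 1 => conv a (convPow a k)

/-- The p-th seminorm of Λ_∞(α): ‖x‖_p = ∑_{n≥1} |x_{n-1}| e^{p α_n}. -/
noncomputable def lamInfNorm (α : ℕ → ℝ) (p : ℕ) (x : ℕ → ℂ) : ℝ :=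
  ∑' n : ℕ, ‖x n‖ * Real.exp ((p : ℝ) * α (n + 1))

/-- The convolution operator T̂_θ, acting on coordinate sequences: T̂_θ x = θ * x. -/
noncomputable def That (θ : ℕ → ℂ) : (ℕ → ℂ) → (ℕ → ℂ) := fun x => conv θ x

/-!
Stability gives `α (i + j + 1) ≤ M (α (i + 1) + α (j + 1))`, so the weights are submultiplicative
up to passing from `p` to `M p`, and `‖a * b‖_p ≤ ‖a‖_{M p} ‖b‖_{M p}`. Since
`T̂_θ^k x = θ^{*k} * x`, the bound on `‖θ^{*k}‖_{M p}` gives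
`‖T̂_θ^k x‖_p ≤ e^{q α₁} ‖x‖_{M p} ≤ ‖x‖_{q + M p}`. Conversely `θ^{*k} = T̂_θ^k e₁`, where
`e₁` is the unit sequence `δ` with `‖δ‖_q = e^{q α₁}`.
-/

open Finset Real

def delta : ℕ → ℂ := fun m => if m = 0 then 1 else 0

noncomputable def lamInfSummand (α : ℕ → ℝ) (p : ℕ) (x : ℕ → ℂ) (n : ℕ) : ℝ :=
  ‖x n‖ * exp ((p : ℝ) * α (n + 1))

lemma lamInfSummand_nonneg (α : ℕ → ℝ) (p : ℕ) (x : ℕ → ℂ) (n : ℕ) :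
    0 ≤ lamInfSummand α p x n := by
  unfold lamInfSummand; positivity

lemma lamInfNorm_eq_tsum (α : ℕ → ℝ) (p : ℕ) (x : ℕ → ℂ) :
    lamInfNorm α p x = ∑' n, lamInfSummand α p x n := rfl

lemma lamInfNorm_nonneg (α : ℕ → ℝ) (p : ℕ) (x : ℕ → ℂ) : 0 ≤ lamInfNorm α p x :=
  tsum_nonneg (lamInfSummand_nonneg α p x)

lemma PowerSeries.mk_conv (a b : ℕ → ℂ) :
    PowerSeries.mk (conv a b) = PowerSeries.mk a * PowerSeries.mk b := by
  ext n
  rw [PowerSeries.coeff_mk, PowerSeries.coeff_mul, Nat.sum_antidiagonal_eq_sum_range_succ_mk]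
  simp [conv]

lemma conv_assoc (a b c : ℕ → ℂ) : conv (conv a b) c = conv a (conv b c) := by
  have h : PowerSeries.mk (conv (conv a b) c) = PowerSeries.mk (conv a (conv b c)) := by
    simp only [PowerSeries.mk_conv, mul_assoc]
  funext n
  simpa using congrArg (PowerSeries.coeff n) h

lemma delta_conv (x : ℕ → ℂ) : conv delta x = x := by
  funext m
  rw [conv, sum_eq_single 0 (fun i _ hi => by simp [delta, hi]) (by simp)]
  simp [delta]

lemma conv_delta (x : ℕ → ℂ) : conv x delta = x := by
  funext m
  rw [conv, sum_eq_single m (fun i hi hne => ?_) (by simp)]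
  · simp [delta]
  · have : m - i ≠ 0 := by have := mem_range.mp hi; omega
    simp [delta, this]

lemma convPow_zero (a : ℕ → ℂ) : convPow a 0 = delta := rfl

lemma iterate_That (θ : ℕ → ℂ) (k : ℕ) (x : ℕ → ℂ) :
    (That θ)^[k] x = conv (convPow θ k) x := by
  induction k with
  | zero => rw [convPow_zero, delta_conv]; rfl
  | succ k ih => rw [Function.iterate_succ_apply', ih, convPow, conv_assoc]; rfl

lemma iterate_That_delta (θ : ℕ → ℂ) (k : ℕ) : (That θ)^[k] delta = convPow θ k := by
  rw [iterate_That, conv_delta]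

lemma summable_lamInfSummand_delta (α : ℕ → ℝ) (p : ℕ) : Summable (lamInfSummand α p delta) :=
  summable_of_ne_finset_zero (s := {0}) fun n hn => by
    simp [lamInfSummand, delta, show n ≠ 0 by simpa using hn]

lemma lamInfNorm_delta (α : ℕ → ℝ) (p : ℕ) : lamInfNorm α p delta = exp (p * α 1) := by
  rw [lamInfNorm, tsum_eq_single 0 fun n hn => by simp [delta, hn]]
  simp [delta]

section Weights

variable {α : ℕ → ℝ}

lemma lamInfNorm_mono (hnonneg : ∀ n, 0 ≤ α n) {p q : ℕ} (hpq : p ≤ q) {x : ℕ → ℂ}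
    (hx : Summable (lamInfSummand α q x)) : lamInfNorm α p x ≤ lamInfNorm α q x := by
  have hle : ∀ n, lamInfSummand α p x n ≤ lamInfSummand α q x n := fun n => by
    unfold lamInfSummand
    gcongr
    exact hnonneg _
  exact Summable.tsum_le_tsum hle (.of_nonneg_of_le (lamInfSummand_nonneg α p x) hle hx) hx

lemma exp_mul_lamInfNorm_le (hmono : Monotone α) {p q : ℕ} {x : ℕ → ℂ}
    (hx : Summable (lamInfSummand α p x)) (hx' : Summable (lamInfSummand α (q + p) x)) :
    exp (q * α 1) * lamInfNorm α p x ≤ lamInfNorm α (q + p) x := by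
  rw [lamInfNorm_eq_tsum, lamInfNorm_eq_tsum, ← hx.tsum_mul_left]
  have hle : ∀ n, exp (q * α 1) * lamInfSummand α p x n ≤ lamInfSummand α (q + p) x n := by
    intro n
    have hα : (q : ℝ) * α 1 ≤ q * α (n + 1) := by gcongr; exact hmono (by omega)
    calc exp (q * α 1) * lamInfSummand α p x n
        = ‖x n‖ * exp (q * α 1 + p * α (n + 1)) := by rw [lamInfSummand, exp_add]; ring
      _ ≤ lamInfSummand α (q + p) x n := by
          unfold lamInfSummand; gcongr; push_cast; linarith
  exact Summable.tsum_le_tsum hle (hx.mul_left _) hx'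

variable (hmono : Monotone α) (hnonneg : ∀ n, 0 ≤ α n) {M : ℕ}
  (hM : ∀ n, α (2 * n) ≤ (M : ℝ) * α n)
include hmono hnonneg hM

lemma weight_le_add (i j : ℕ) : α (i + j + 1) ≤ M * (α (i + 1) + α (j + 1)) := by
  wlog hji : j ≤ i generalizing i j
  · simpa only [add_comm i j, add_comm (α (i + 1))] using this j i (by omega)
  calc α (i + j + 1) ≤ α (2 * (i + 1)) := hmono (by omega)
    _ ≤ M * α (i + 1) := hM _
    _ ≤ M * (α (i + 1) + α (j + 1)) := by gcongr; linarith [hnonneg (j + 1)]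

lemma lamInfSummand_conv_le (p : ℕ) (a b : ℕ → ℂ) (n : ℕ) :
    lamInfSummand α p (conv a b) n ≤
      ∑ i ∈ range (n + 1), lamInfSummand α (M * p) a i * lamInfSummand α (M * p) b (n - i) := by
  calc lamInfSummand α p (conv a b) n
      ≤ ∑ i ∈ range (n + 1), ‖a i‖ * ‖b (n - i)‖ * exp (p * α (n + 1)) := by
        rw [lamInfSummand, conv, ← sum_mul]
        gcongr
        exact (norm_sum_le _ _).trans_eq (by simp only [norm_mul])
    _ ≤ _ := by
        refine sum_le_sum fun i hi => ?_
        have hin : i + (n - i) = n := by have := mem_range.mp hi; omega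
        have hw := weight_le_add hmono hnonneg hM i (n - i)
        rw [hin] at hw
        rw [lamInfSummand, lamInfSummand, mul_mul_mul_comm, ← exp_add]
        gcongr
        push_cast
        nlinarith [(Nat.cast_nonneg p : (0 : ℝ) ≤ p)]

lemma summable_lamInfSummand_conv_and_le {p : ℕ} {a b : ℕ → ℂ}
    (ha : Summable (lamInfSummand α (M * p) a)) (hb : Summable (lamInfSummand α (M * p) b)) :
    Summable (lamInfSummand α p (conv a b)) ∧
      lamInfNorm α p (conv a b) ≤ lamInfNorm α (M * p) a * lamInfNorm α (M * p) b := by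
  have hprod := hasSum_sum_range_mul_of_summable_norm ha.norm hb.norm
  have hle := lamInfSummand_conv_le hmono hnonneg hM p a b
  have hsum := Summable.of_nonneg_of_le (lamInfSummand_nonneg α p _) hle hprod.summable
  exact ⟨hsum, hasSum_le hle hsum.hasSum hprod⟩

lemma summable_lamInfSummand_convPow {θ : ℕ → ℂ} (hθ : ∀ p, Summable (lamInfSummand α p θ))
    (k p : ℕ) : Summable (lamInfSummand α p (convPow θ k)) := by
  induction k generalizing p with
  | zero => exact summable_lamInfSummand_delta α p
  | succ k ih => exact (summable_lamInfSummand_conv_and_le hmono hnonneg hM (hθ _) (ih _)).1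

end Weights

/-- For a stable sequence α and θ ∈ Λ_∞(α), the convolution operator
T̂_θ : Λ_∞(α) → Λ_∞(α) is power bounded iff for every p there is q with
‖θ^{*k}‖_p ≤ ‖e₁‖_q = e^{q α₁} for all k ≥ 1. -/
theorem stmt_12 (α : ℕ → ℝ) (hmono : Monotone α) (hnonneg : ∀ n, 0 ≤ α n)
    (M : ℕ) (hM : ∀ n, α (2 * n) ≤ (M : ℝ) * α n) (θ : ℕ → ℂ)
    (hθ : ∀ p : ℕ, Summable fun n : ℕ => ‖θ n‖ * Real.exp ((p : ℝ) * α (n + 1))) :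
    (∀ p : ℕ, ∃ q : ℕ, ∀ k : ℕ, 1 ≤ k →
        lamInfNorm α p (convPow θ k) ≤ Real.exp ((q : ℝ) * α 1))
      ↔ (∀ p : ℕ, ∃ q : ℕ, ∀ k : ℕ, ∀ x : ℕ → ℂ,
          (∀ r : ℕ, Summable fun n : ℕ => ‖x n‖ * Real.exp ((r : ℝ) * α (n + 1))) →
          lamInfNorm α p ((That θ)^[k] x) ≤ lamInfNorm α q x) := by
  constructor
  · intro H p
    obtain ⟨q, hq⟩ := H (M * p)
    refine ⟨q + M * p + p, fun k x hx => ?_⟩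
    rcases k.eq_zero_or_pos with rfl | hk
    · exact lamInfNorm_mono hnonneg (by omega) (hx _)
    have hθk := summable_lamInfSummand_convPow hmono hnonneg hM hθ k (M * p)
    calc lamInfNorm α p ((That θ)^[k] x)
        ≤ lamInfNorm α (M * p) (convPow θ k) * lamInfNorm α (M * p) x := by
          rw [iterate_That]
          exact (summable_lamInfSummand_conv_and_le hmono hnonneg hM hθk (hx _)).2
      _ ≤ exp (q * α 1) * lamInfNorm α (M * p) x := by
          gcongr
          exacts [lamInfNorm_nonneg α _ x, hq k hk]
      _ ≤ lamInfNorm α (q + M * p) x := exp_mul_lamInfNorm_le hmono (hx _) (hx _)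
      _ ≤ lamInfNorm α (q + M * p + p) x := lamInfNorm_mono hnonneg (by omega) (hx _)
  · intro H p
    obtain ⟨q, hq⟩ := H p
    refine ⟨q, fun k _ => ?_⟩
    calc lamInfNorm α p (convPow θ k) = lamInfNorm α p ((That θ)^[k] delta) := by
          rw [iterate_That_delta]
      _ ≤ lamInfNorm α q delta := hq k delta (summable_lamInfSummand_delta α)
      _ = exp (q * α 1) := lamInfNorm_delta α q
end

section
/- Let β be a sequence with B := ∑_{n=1}^∞ |β_{n-1}| e^n < ∞. Then the dual convolution operator Ť_β e_n = ∑_{j=1}^n β_{n-j} e_j on Λ_1(n) satisfies ‖Ť_β e_n‖_p ≤ B ‖e_n‖_p for all p, n ∈ ℕ, where ‖x‖_p = ∑_j |x_j| e^{-j/p}; hence Ť_β is strongly tame. Consequently, if θ ∈ Λ_1(n) and sup_p e^{1/(2p)}‖θ‖_{2p} + ∑_n |β_{n-1}| e^n ≤ 1, then the Toeplitz operator T_{θ,β} = T̂_θ + Ť_β on Λ_1(n) is power bounded. -/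
/-- The p-th seminorm of Λ₁(n): ‖x‖_p = ∑_{j≥1} |x_{j-1}| e^{-j/p}. -/
noncomputable def lamOneNNorm (p : ℕ) (x : ℕ → ℂ) : ℝ :=
  ∑' j : ℕ, ‖x j‖ * Real.exp (-((j : ℝ) + 1) / (p : ℝ))

/-- The Toeplitz operator T_{θ,β} = T̂_θ + Ť_β acting on coordinate sequences
(0-indexed): (T_{θ,β} x)_m = ∑_{i=0}^m θ_{m-i} x_i + ∑_{i≥0} β_i x_{m+i}. -/
noncomputable def Toep (θ β : ℕ → ℂ) : (ℕ → ℂ) → (ℕ → ℂ) :=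
  fun x m => (∑ i ∈ Finset.range (m + 1), θ (m - i) * x i) + ∑' i : ℕ, β i * x (m + i)

/-! The weights `w_r(j) = e^{-(j+1)/r}` of `‖·‖_r` satisfy `w_r(k) e^{-d/r} = w_r(k + d)` and,
for `r ≥ 1`, `w_r(m) ≤ e^{i+1} w_r(m + i)`. The first turns the `θ`-part of `T_{θ,β} x` into a
Cauchy product, of weighted norm `(∑ ‖θ_d‖ e^{-d/r}) ‖x‖_r ≤ e^{1/(2r)} ‖θ‖_{2r} ‖x‖_r`; the second
dominates the `β`-part, a double series over `(m, i)`, by the product series `B ‖x‖_r` re-indexed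
injectively by `(m, i) ↦ (i, m + i)`. Hence `‖T_{θ,β} x‖_r ≤ ‖x‖_r` for every `r`, and iterating
gives power boundedness with `q = p`. -/

open Real Finset

noncomputable def lamWeight (r : ℝ) (j : ℕ) : ℝ := exp (-((j : ℝ) + 1) / r)

def MemLamOne (x : ℕ → ℂ) : Prop :=
  ∀ r : ℕ, 1 ≤ r → Summable fun j => ‖x j‖ * lamWeight r j

section Weights

variable {r : ℝ}

lemma lamWeight_pos (r : ℝ) (j : ℕ) : 0 < lamWeight r j := exp_pos _

lemma lamWeight_mul_exp_neg {k m : ℕ} (hkm : k ≤ m) :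
    lamWeight r k * exp (-((m - k : ℕ) : ℝ) / r) = lamWeight r m := by
  rw [lamWeight, lamWeight, ← exp_add, Nat.cast_sub hkm]
  ring_nf

lemma lamWeight_le_exp_mul_lamWeight_add (hr : 1 ≤ r) (m i : ℕ) :
    lamWeight r m ≤ exp ((i : ℝ) + 1) * lamWeight r (m + i) := by
  have hi : (i : ℝ) / r ≤ i := div_le_self i.cast_nonneg hr
  rw [lamWeight, lamWeight, ← exp_add, exp_le_exp, Nat.cast_add]
  have : -((m : ℝ) + i + 1) / r = -((m : ℝ) + 1) / r - i / r := by ring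
  linarith

lemma exp_neg_div_le_lamWeight_two_mul (hr : 0 < r) (d : ℕ) :
    exp (-(d : ℝ) / r) ≤ exp (1 / (2 * r)) * lamWeight (2 * r) d := by
  rw [lamWeight, ← exp_add, exp_le_exp]
  have : (d : ℝ) / (2 * r) ≤ d / r := div_le_div_of_nonneg_left d.cast_nonneg hr (by linarith)
  have : 1 / (2 * r) + -((d : ℝ) + 1) / (2 * r) = -((d : ℝ) / (2 * r)) := by ring
  rw [neg_div]
  linarith

lemma exp_neg_div_le_exp_sub_mul (hr : 1 ≤ r) {j n : ℕ} (hjn : j ≤ n) :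
    exp (-(j : ℝ) / r) ≤ exp (((n - j : ℕ) : ℝ) + 1) * exp (-(n : ℝ) / r) := by
  rw [← exp_add, exp_le_exp, Nat.cast_sub hjn]
  have : ((n : ℝ) - j) / r ≤ n - j := div_le_self (by simpa using hjn) hr
  have : -(j : ℝ) / r = -(n : ℝ) / r + (n - j) / r := by ring
  linarith

end Weights

lemma sum_Icc_norm_mul_exp_le (β : ℕ → ℂ) (hB : Summable fun i : ℕ => ‖β i‖ * exp ((i : ℝ) + 1))
    {r : ℝ} (hr : 1 ≤ r) (n : ℕ) :
    ∑ j ∈ Icc 1 n, ‖β (n - j)‖ * exp (-(j : ℝ) / r)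
      ≤ (∑' i : ℕ, ‖β i‖ * exp ((i : ℝ) + 1)) * exp (-(n : ℝ) / r) := by
  have hinj : Set.InjOn (n - ·) (Icc 1 n : Set ℕ) := by
    intro a ha b hb hab
    simp only [coe_Icc, Set.mem_Icc] at ha hb
    simp only at hab
    omega
  calc ∑ j ∈ Icc 1 n, ‖β (n - j)‖ * exp (-(j : ℝ) / r)
      ≤ ∑ j ∈ Icc 1 n, ‖β (n - j)‖ * exp (((n - j : ℕ) : ℝ) + 1) * exp (-(n : ℝ) / r) := by
        refine sum_le_sum fun j hj => ?_
        rw [mul_assoc]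
        exact mul_le_mul_of_nonneg_left
          (exp_neg_div_le_exp_sub_mul hr (mem_Icc.mp hj).2) (norm_nonneg _)
    _ = (∑ i ∈ (Icc 1 n).image (n - ·), ‖β i‖ * exp ((i : ℝ) + 1)) * exp (-(n : ℝ) / r) := by
        rw [sum_mul, sum_image hinj]
    _ ≤ _ := by
        gcongr
        exact hB.sum_le_tsum _ fun i _ => by positivity

section Convolution

variable {r : ℝ} {θ x : ℕ → ℂ}

lemma hasSum_convolution_norm_mul_lamWeight
    (hθ : Summable fun d : ℕ => ‖θ d‖ * exp (-(d : ℝ) / r))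
    (hx : Summable fun j => ‖x j‖ * lamWeight r j) :
    HasSum (fun m => (∑ i ∈ range (m + 1), ‖θ (m - i)‖ * ‖x i‖) * lamWeight r m)
      ((∑' j, ‖x j‖ * lamWeight r j) * ∑' d : ℕ, ‖θ d‖ * exp (-(d : ℝ) / r)) := by
  have hprod := hx.mul_of_nonneg hθ (fun j => mul_nonneg (norm_nonneg _) (lamWeight_pos r j).le)
    (fun d => by positivity)
  have hterm : ∀ m, (∑ i ∈ range (m + 1), ‖θ (m - i)‖ * ‖x i‖) * lamWeight r m
      = ∑ k ∈ range (m + 1), ‖x k‖ * lamWeight r k * (‖θ (m - k)‖ * exp (-((m - k : ℕ) : ℝ) / r)) := by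
    intro m
    rw [sum_mul]
    refine sum_congr rfl fun k hk => ?_
    rw [← lamWeight_mul_exp_neg (Nat.lt_succ_iff.mp (mem_range.mp hk))]
    ac_rfl
  rw [funext hterm, hx.tsum_mul_tsum_eq_tsum_sum_range hθ hprod]
  exact (summable_sum_mul_range_of_summable_mul (f := fun j => ‖x j‖ * lamWeight r j)
    (g := fun d : ℕ => ‖θ d‖ * exp (-(d : ℝ) / r)) hprod).hasSum

lemma tsum_norm_mul_exp_neg_div_le (hr : 0 < r)
    (hθ : Summable fun d => ‖θ d‖ * lamWeight (2 * r) d) :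
    Summable (fun d : ℕ => ‖θ d‖ * exp (-(d : ℝ) / r)) ∧
      ∑' d : ℕ, ‖θ d‖ * exp (-(d : ℝ) / r)
        ≤ exp (1 / (2 * r)) * ∑' d, ‖θ d‖ * lamWeight (2 * r) d := by
  have hle : ∀ d : ℕ, ‖θ d‖ * exp (-(d : ℝ) / r)
      ≤ exp (1 / (2 * r)) * (‖θ d‖ * lamWeight (2 * r) d) := fun d => by
    rw [mul_left_comm]
    exact mul_le_mul_of_nonneg_left (exp_neg_div_le_lamWeight_two_mul hr d) (norm_nonneg _)
  have hsum := Summable.of_nonneg_of_le (fun d => by positivity) hle (hθ.mul_left _)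
  refine ⟨hsum, ?_⟩
  rw [← tsum_mul_left]
  exact hsum.tsum_le_tsum hle (hθ.mul_left _)

end Convolution

section Tail

variable {r : ℝ} {β x : ℕ → ℂ}

lemma summable_tail_prod_and_tsum_le (hr : 1 ≤ r)
    (hβ : Summable fun i : ℕ => ‖β i‖ * exp ((i : ℝ) + 1))
    (hx : Summable fun j => ‖x j‖ * lamWeight r j) :
    Summable (fun q : ℕ × ℕ => ‖β q.2‖ * ‖x (q.1 + q.2)‖ * lamWeight r q.1) ∧
      ∑' q : ℕ × ℕ, ‖β q.2‖ * ‖x (q.1 + q.2)‖ * lamWeight r q.1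
        ≤ (∑' i : ℕ, ‖β i‖ * exp ((i : ℝ) + 1)) * ∑' j, ‖x j‖ * lamWeight r j := by
  set F : ℕ × ℕ → ℝ := fun q => ‖β q.1‖ * exp ((q.1 : ℝ) + 1) * (‖x q.2‖ * lamWeight r q.2)
  have hF0 : ∀ q, 0 ≤ F q := fun q =>
    mul_nonneg (by positivity) (mul_nonneg (norm_nonneg _) (lamWeight_pos r _).le)
  have hF : Summable F := hβ.mul_of_nonneg hx (fun i => by positivity)
    (fun j => mul_nonneg (norm_nonneg _) (lamWeight_pos r j).le)
  set e : ℕ × ℕ → ℕ × ℕ := fun q => (q.2, q.1 + q.2)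
  have he : Function.Injective e := by
    rintro ⟨m, i⟩ ⟨m', i'⟩ h
    simp only [e, Prod.mk.injEq] at h
    ext <;> omega
  have hle : ∀ q : ℕ × ℕ, ‖β q.2‖ * ‖x (q.1 + q.2)‖ * lamWeight r q.1 ≤ F (e q) := by
    rintro ⟨m, i⟩
    calc ‖β i‖ * ‖x (m + i)‖ * lamWeight r m
        ≤ ‖β i‖ * ‖x (m + i)‖ * (exp ((i : ℝ) + 1) * lamWeight r (m + i)) := by
          gcongr
          exact lamWeight_le_exp_mul_lamWeight_add hr m i
      _ = F (e (m, i)) := by simp only [F, e]; ring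
  have hFe := hF.comp_injective he
  have hf := Summable.of_nonneg_of_le
    (fun q => mul_nonneg (by positivity) (lamWeight_pos r _).le) hle hFe
  refine ⟨hf, ?_⟩
  calc _ ≤ ∑' q, F (e q) := hf.tsum_le_tsum hle hFe
    _ ≤ ∑' q, F q := tsum_comp_le_tsum_of_inj hF hF0 he
    _ = _ := (hβ.tsum_mul_tsum hx hF).symm

end Tail

section Contraction

variable {r : ℝ} {θ β x : ℕ → ℂ}

lemma norm_toep_le {m : ℕ} (h : Summable fun i => ‖β i‖ * ‖x (m + i)‖) :
    ‖Toep θ β x m‖ ≤ (∑ i ∈ range (m + 1), ‖θ (m - i)‖ * ‖x i‖) + ∑' i, ‖β i‖ * ‖x (m + i)‖ := by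
  refine (norm_add_le _ _).trans (add_le_add ?_ ?_)
  · exact (norm_sum_le _ _).trans_eq (sum_congr rfl fun i _ => norm_mul _ _)
  · simp only [← norm_mul] at h ⊢
    exact norm_tsum_le_tsum_norm h

lemma toep_summable_and_tsum_le (hr : 1 ≤ r)
    (hβ : Summable fun i : ℕ => ‖β i‖ * exp ((i : ℝ) + 1))
    (hθ : Summable fun d => ‖θ d‖ * lamWeight (2 * r) d)
    (hsmall : exp (1 / (2 * r)) * ∑' d, ‖θ d‖ * lamWeight (2 * r) d
      + ∑' i : ℕ, ‖β i‖ * exp ((i : ℝ) + 1) ≤ 1)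
    (hx : Summable fun j => ‖x j‖ * lamWeight r j) :
    Summable (fun m => ‖Toep θ β x m‖ * lamWeight r m) ∧
      ∑' m, ‖Toep θ β x m‖ * lamWeight r m ≤ ∑' j, ‖x j‖ * lamWeight r j := by
  set X := ∑' j, ‖x j‖ * lamWeight r j
  have hX : 0 ≤ X := tsum_nonneg fun j => mul_nonneg (norm_nonneg _) (lamWeight_pos r j).le
  obtain ⟨hθr, hθle⟩ := tsum_norm_mul_exp_neg_div_le (by linarith) hθ
  have hconv := hasSum_convolution_norm_mul_lamWeight hθr hx
  obtain ⟨htail, htail_le⟩ := summable_tail_prod_and_tsum_le hr hβ hx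
  have hinner : ∀ m, Summable fun i => ‖β i‖ * ‖x (m + i)‖ := fun m =>
    (summable_mul_right_iff (lamWeight_pos r m).ne').mp (htail.prod_factor m)
  set T : ℕ → ℝ := fun m => (∑' i, ‖β i‖ * ‖x (m + i)‖) * lamWeight r m
  have hT_eq : T = fun m => ∑' i, ‖β i‖ * ‖x (m + i)‖ * lamWeight r m :=
    funext fun m => tsum_mul_right.symm
  have hT : Summable T := hT_eq ▸ htail.prod
  have hT_le : ∑' m, T m ≤ (∑' i : ℕ, ‖β i‖ * exp ((i : ℝ) + 1)) * X := by
    rw [hT_eq, ← htail.tsum_prod]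
    exact htail_le
  have hpt : ∀ m, ‖Toep θ β x m‖ * lamWeight r m
      ≤ (∑ i ∈ range (m + 1), ‖θ (m - i)‖ * ‖x i‖) * lamWeight r m + T m := fun m => by
    rw [← add_mul]
    exact mul_le_mul_of_nonneg_right (norm_toep_le (hinner m)) (lamWeight_pos r m).le
  have hsum := Summable.of_nonneg_of_le
    (fun m => mul_nonneg (norm_nonneg _) (lamWeight_pos r m).le) hpt (hconv.summable.add hT)
  refine ⟨hsum, ?_⟩
  calc ∑' m, ‖Toep θ β x m‖ * lamWeight r m
      ≤ ∑' m, ((∑ i ∈ range (m + 1), ‖θ (m - i)‖ * ‖x i‖) * lamWeight r m + T m) :=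
        hsum.tsum_le_tsum hpt (hconv.summable.add hT)
    _ = X * ∑' d : ℕ, ‖θ d‖ * exp (-(d : ℝ) / r) + ∑' m, T m := by
        rw [hconv.summable.tsum_add hT, hconv.tsum_eq]
    _ ≤ X * (exp (1 / (2 * r)) * ∑' d, ‖θ d‖ * lamWeight (2 * r) d)
          + (∑' i : ℕ, ‖β i‖ * exp ((i : ℝ) + 1)) * X := by gcongr
    _ = (exp (1 / (2 * r)) * ∑' d, ‖θ d‖ * lamWeight (2 * r) d
          + ∑' i : ℕ, ‖β i‖ * exp ((i : ℝ) + 1)) * X := by ring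
    _ ≤ X := mul_le_of_le_one_left hX hsmall

end Contraction

section PowerBounded

variable {θ β : ℕ → ℂ}

lemma toep_memLamOne_and_lamOneNNorm_le
    (hβ : Summable fun i : ℕ => ‖β i‖ * exp ((i : ℝ) + 1)) (hθ : MemLamOne θ)
    (hsmall : ∀ p : ℕ, 1 ≤ p → exp (1 / (2 * (p : ℝ))) * ∑' d, ‖θ d‖ * lamWeight (2 * p) d
      + ∑' i : ℕ, ‖β i‖ * exp ((i : ℝ) + 1) ≤ 1)
    {x : ℕ → ℂ} (hx : MemLamOne x) :
    MemLamOne (Toep θ β x) ∧ ∀ p : ℕ, 1 ≤ p → lamOneNNorm p (Toep θ β x) ≤ lamOneNNorm p x := by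
  have h := fun (p : ℕ) (hp : 1 ≤ p) => toep_summable_and_tsum_le (by exact_mod_cast hp) hβ
    (by simpa using hθ (2 * p) (by omega)) (hsmall p hp) (hx p hp)
  exact ⟨fun p hp => (h p hp).1, fun p hp => (h p hp).2⟩

lemma iterate_toep_memLamOne_and_lamOneNNorm_le
    (hβ : Summable fun i : ℕ => ‖β i‖ * exp ((i : ℝ) + 1)) (hθ : MemLamOne θ)
    (hsmall : ∀ p : ℕ, 1 ≤ p → exp (1 / (2 * (p : ℝ))) * ∑' d, ‖θ d‖ * lamWeight (2 * p) d
      + ∑' i : ℕ, ‖β i‖ * exp ((i : ℝ) + 1) ≤ 1)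
    {x : ℕ → ℂ} (hx : MemLamOne x) (k : ℕ) :
    MemLamOne ((Toep θ β)^[k] x) ∧
      ∀ p : ℕ, 1 ≤ p → lamOneNNorm p ((Toep θ β)^[k] x) ≤ lamOneNNorm p x := by
  induction k with
  | zero => exact ⟨hx, fun _ _ => le_rfl⟩
  | succ k ih =>
    rw [Function.iterate_succ_apply']
    obtain ⟨hmem, hle⟩ := toep_memLamOne_and_lamOneNNorm_le hβ hθ hsmall ih.1
    exact ⟨hmem, fun p hp => (hle p hp).trans (ih.2 p hp)⟩

end PowerBounded

/-- If B = ∑_{n≥1} |β_{n-1}| eⁿ < ∞, then `‖Ť_β e_n‖_p ≤ B ‖e_n‖_p` for all p, n, so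
Ť_β is strongly tame on Λ₁(n); consequently, if moreover θ ∈ Λ₁(n) and
sup_p e^{1/(2p)}‖θ‖_{2p} + ∑_n |β_{n-1}| eⁿ ≤ 1, then the Toeplitz operator
T_{θ,β} = T̂_θ + Ť_β on Λ₁(n) is power bounded. -/
theorem stmt_19 (β θ : ℕ → ℂ)
    (hB : Summable fun n : ℕ => ‖β n‖ * Real.exp ((n : ℝ) + 1)) :
    (∀ p n : ℕ, 1 ≤ p → 1 ≤ n →
      ∑ j ∈ Finset.Icc 1 n, ‖β (n - j)‖ * Real.exp (-(j : ℝ) / (p : ℝ))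
        ≤ (∑' i : ℕ, ‖β i‖ * Real.exp ((i : ℝ) + 1)) * Real.exp (-(n : ℝ) / (p : ℝ)))
    ∧ ((∀ p : ℕ, 1 ≤ p →
          Summable fun i : ℕ => ‖θ i‖ * Real.exp (-((i : ℝ) + 1) / (p : ℝ))) →
       (∀ p : ℕ, 1 ≤ p →
          Real.exp (1 / (2 * (p : ℝ)))
              * (∑' i : ℕ, ‖θ i‖ * Real.exp (-((i : ℝ) + 1) / (2 * (p : ℝ))))
            + (∑' i : ℕ, ‖β i‖ * Real.exp ((i : ℝ) + 1)) ≤ 1) →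
       ∀ p : ℕ, 1 ≤ p → ∃ q : ℕ, 1 ≤ q ∧ ∀ k : ℕ, ∀ x : ℕ → ℂ,
         (∀ r : ℕ, 1 ≤ r →
            Summable fun j : ℕ => ‖x j‖ * Real.exp (-((j : ℝ) + 1) / (r : ℝ))) →
         lamOneNNorm p ((Toep θ β)^[k] x) ≤ lamOneNNorm q x) := by
  refine ⟨fun p n hp _ => sum_Icc_norm_mul_exp_le β hB (by exact_mod_cast hp) n, ?_⟩
  intro hθ hsmall p hp
  exact ⟨p, hp, fun k x hx => (iterate_toep_memLamOne_and_lamOneNNorm_le hB hθ hsmall hx k).2 p hp⟩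
end
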